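/- arXiv:1310.4680 — 3 statements merged into one kernel-verified Lean document; each statement's English description precedes it below -/
import Mathlib

section
/- In a weak Hopf algebra H, the target space H_t = ε_t(H) and the source space H_s = ε_s(H) commute elementwise: yz = zy for all y ∈ H_s and z ∈ H_t. -/
open TensorProduct LinearMap

/-- A weak Hopf algebra over a commutative ring `k`: a `k`-algebra `H` equipped with a
coassociative counital comultiplication which is multiplicative, satisfying the weak
comultiplication axiom `Δ²(1) = (Δ(1)⊗1)(1⊗Δ(1)) = (1⊗Δ(1))(Δ(1)⊗1)`, the weak counit axiom
`ε(xyz) = ε(xy₁)ε(y₂z) = ε(xy₂)ε(y₁z)`, and an antipode satisfying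
`h₁S(h₂) = ε(1₁h)1₂`, `S(h₁)h₂ = 1₁ε(h1₂)` and `S(h₁)h₂S(h₃) = S(h)`. -/
structure WeakHopfAlgebra (k H : Type*) [CommRing k] [Ring H] [Algebra k H] where
  comul : H →ₗ[k] H ⊗[k] H
  counit : H →ₗ[k] k
  antipode : H →ₗ[k] H
  comul_coassoc : (TensorProduct.assoc k H H H).toLinearMap ∘ₗ
      (LinearMap.rTensor H comul) ∘ₗ comul = (LinearMap.lTensor H comul) ∘ₗ comul
  counit_comul : (TensorProduct.lid k H).toLinearMap ∘ₗ
      (LinearMap.rTensor H counit) ∘ₗ comul = LinearMap.id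
  comul_counit : (TensorProduct.rid k H).toLinearMap ∘ₗ
      (LinearMap.lTensor H counit) ∘ₗ comul = LinearMap.id
  comul_mul : ∀ x y : H, comul (x * y) = comul x * comul y
  comul_one_left : (LinearMap.rTensor H comul) (comul 1)
      = (comul 1 ⊗ₜ[k] (1 : H)) * ((TensorProduct.assoc k H H H).symm ((1 : H) ⊗ₜ[k] comul 1))
  comul_one_right : (LinearMap.rTensor H comul) (comul 1)
      = ((TensorProduct.assoc k H H H).symm ((1 : H) ⊗ₜ[k] comul 1)) * (comul 1 ⊗ₜ[k] (1 : H))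
  counit_mul_left : ∀ x y z : H, counit (x * y * z)
      = LinearMap.mul' k k ((TensorProduct.map (counit ∘ₗ LinearMap.mulLeft k x)
          (counit ∘ₗ LinearMap.mulRight k z)) (comul y))
  counit_mul_right : ∀ x y z : H, counit (x * y * z)
      = LinearMap.mul' k k ((TensorProduct.map (counit ∘ₗ LinearMap.mulRight k z)
          (counit ∘ₗ LinearMap.mulLeft k x)) (comul y))
  antipode_right : ∀ h : H,
      LinearMap.mul' k H ((LinearMap.lTensor H antipode) (comul h))
        = (TensorProduct.lid k H) ((LinearMap.rTensor H
            (counit ∘ₗ LinearMap.mulRight k h)) (comul 1))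
  antipode_left : ∀ h : H,
      LinearMap.mul' k H ((LinearMap.rTensor H antipode) (comul h))
        = (TensorProduct.rid k H) ((LinearMap.lTensor H
            (counit ∘ₗ LinearMap.mulLeft k h)) (comul 1))
  antipode_mid : ∀ h : H,
      LinearMap.mul' k H ((TensorProduct.map
          (LinearMap.mul' k H ∘ₗ LinearMap.rTensor H antipode) antipode)
            ((LinearMap.rTensor H comul) (comul h))) = antipode h

namespace WeakHopfAlgebra

variable {k H : Type*} [CommRing k] [Ring H] [Algebra k H]

/-- The target map `ε_t(h) = ε(1₁h)1₂`. -/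
noncomputable def εt (W : WeakHopfAlgebra k H) : H →ₗ[k] H :=
  (TensorProduct.lid k H).toLinearMap ∘ₗ (LinearMap.rTensor H W.counit) ∘ₗ
    (LinearMap.mulLeft k (W.comul 1)) ∘ₗ ((TensorProduct.mk k H H).flip 1)

/-- The source map `ε_s(h) = 1₁ε(h1₂)`. -/
noncomputable def εs (W : WeakHopfAlgebra k H) : H →ₗ[k] H :=
  (TensorProduct.rid k H).toLinearMap ∘ₗ (LinearMap.lTensor H W.counit) ∘ₗ
    (LinearMap.mulRight k (W.comul 1)) ∘ₗ ((TensorProduct.mk k H H) 1)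

end WeakHopfAlgebra

/-! Contract the outer legs of `Δ²(1) = 1₁ ⊗ 1₂ ⊗ 1₃` against `ε(- h)` and `ε(g -)`. The weak
comultiplication axiom factors `Δ²(1)` both as `(Δ(1) ⊗ 1)(1 ⊗ Δ(1))` and as
`(1 ⊗ Δ(1))(Δ(1) ⊗ 1)`; the first factorization contracts to `ε_t(h) ε_s(g)`, the second to
`ε_s(g) ε_t(h)`. -/

namespace TensorProduct

variable {k A : Type*} [CommSemiring k] [Semiring A] [Algebra k A]

theorem mul_tmul_one_eq_rTensor (u : A ⊗[k] A) (a : A) :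
    u * (a ⊗ₜ[k] (1 : A)) = rTensor A (mulRight k a) u := by
  rw [← mulRight_apply (R := k), mulRight_tmul, mulRight_one]
  rfl

theorem one_tmul_mul_eq_lTensor (u : A ⊗[k] A) (a : A) :
    ((1 : A) ⊗ₜ[k] a) * u = lTensor A (mulLeft k a) u := by
  rw [← mulLeft_apply (R := k), mulLeft_tmul, mulLeft_one]
  rfl

noncomputable def contractOuter (φ ψ : A →ₗ[k] k) : (A ⊗[k] A) ⊗[k] A →ₗ[k] A :=
  (TensorProduct.lid k A).toLinearMap ∘ₗ rTensor A φ ∘ₗ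
    (TensorProduct.rid k (A ⊗[k] A)).toLinearMap ∘ₗ lTensor (A ⊗[k] A) ψ

@[simp]
theorem contractOuter_tmul (φ ψ : A →ₗ[k] k) (a b c : A) :
    contractOuter φ ψ ((a ⊗ₜ[k] b) ⊗ₜ[k] c) = φ a • ψ c • b := by
  simp [contractOuter, smul_comm (ψ c)]

theorem contractOuter_tmul_one_mul (φ ψ : A →ₗ[k] k) (u v : A ⊗[k] A) :
    contractOuter φ ψ ((u ⊗ₜ[k] (1 : A)) * (TensorProduct.assoc k A A A).symm ((1 : A) ⊗ₜ[k] v))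
      = TensorProduct.lid k A (rTensor A φ u) * TensorProduct.rid k A (lTensor A ψ v) := by
  induction u using TensorProduct.induction_on with
  | zero => simp
  | add u₁ u₂ h₁ h₂ => simp only [add_tmul, add_mul, map_add, h₁, h₂]
  | tmul a b =>
    induction v using TensorProduct.induction_on with
    | zero => simp
    | add v₁ v₂ h₁ h₂ => simp only [tmul_add, map_add, mul_add, h₁, h₂]
    | tmul c d => simp [smul_comm (φ a)]

theorem contractOuter_mul_tmul_one (φ ψ : A →ₗ[k] k) (u v : A ⊗[k] A) :
    contractOuter φ ψ ((TensorProduct.assoc k A A A).symm ((1 : A) ⊗ₜ[k] v) * (u ⊗ₜ[k] (1 : A)))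
      = TensorProduct.rid k A (lTensor A ψ v) * TensorProduct.lid k A (rTensor A φ u) := by
  induction u using TensorProduct.induction_on with
  | zero => simp
  | add u₁ u₂ h₁ h₂ => simp only [add_tmul, mul_add, map_add, h₁, h₂]
  | tmul a b =>
    induction v using TensorProduct.induction_on with
    | zero => simp
    | add v₁ v₂ h₁ h₂ => simp only [tmul_add, map_add, add_mul, h₁, h₂]
    | tmul c d => simp [smul_comm (φ a)]

end TensorProduct

namespace WeakHopfAlgebra

open TensorProduct

variable {k H : Type*} [CommRing k] [Ring H] [Algebra k H]

theorem εt_apply (W : WeakHopfAlgebra k H) (h : H) :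
    W.εt h = TensorProduct.lid k H (rTensor H (W.counit ∘ₗ mulRight k h) (W.comul 1)) := by
  simp [εt, mul_tmul_one_eq_rTensor, ← rTensor_comp_apply]

theorem εs_apply (W : WeakHopfAlgebra k H) (g : H) :
    W.εs g = TensorProduct.rid k H (lTensor H (W.counit ∘ₗ mulLeft k g) (W.comul 1)) := by
  simp [εs, one_tmul_mul_eq_lTensor, ← lTensor_comp_apply]

end WeakHopfAlgebra

/-- In a weak Hopf algebra `H`, the target space `H_t = ε_t(H)` and the source space
`H_s = ε_s(H)` commute elementwise: `yz = zy` for all `y ∈ H_s`, `z ∈ H_t`. -/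
theorem weakHopf_source_target_commute {k H : Type*} [CommRing k] [Ring H] [Algebra k H]
    (W : WeakHopfAlgebra k H) (y z : H)
    (hy : y ∈ Set.range W.εs) (hz : z ∈ Set.range W.εt) :
    y * z = z * y := by
  obtain ⟨g, rfl⟩ := hy
  obtain ⟨h, rfl⟩ := hz
  let φ := W.counit ∘ₗ mulRight k h
  let ψ := W.counit ∘ₗ mulLeft k g
  calc W.εs g * W.εt h
      = TensorProduct.contractOuter φ ψ (rTensor H W.comul (W.comul 1)) := by
        rw [W.comul_one_right, TensorProduct.contractOuter_mul_tmul_one,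
          W.εs_apply, W.εt_apply]
    _ = W.εt h * W.εs g := by
        rw [W.comul_one_left, TensorProduct.contractOuter_tmul_one_mul,
          W.εs_apply, W.εt_apply]
end

section
/- Let H be a weak Hopf algebra and A a left H-module algebra. Then the smash product A # H := A ⊗_{H_t} H, with multiplication (a # h)(a' # h') = a(h₁·a') # h₂h' and unit 1_A # 1_H, is a unital associative algebra. -/
open TensorProduct LinearMap

namespace WeakHopfAlgebra

variable {k H : Type*} [CommRing k] [Ring H] [Algebra k H]

/-- The subspace of relations defining the relative tensor product `A ⊗_{H_t} H`
underlying the smash product `A # H`: it is spanned by the elements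
`(a·z) ⊗ h - a ⊗ (zh)` for `z ∈ H_t`, where `a·z := a (z·1_A)`. -/
noncomputable def smashRel (W : WeakHopfAlgebra k H) {A : Type*} [AddCommGroup A] [Module k A]
    (mulA : A →ₗ[k] A →ₗ[k] A) (oneA : A) (act : H →ₗ[k] A →ₗ[k] A) :
    Submodule k (A ⊗[k] H) :=
  Submodule.span k {x | ∃ (a : A) (h z : H), z ∈ Set.range W.εt ∧
    x = (mulA a (act z oneA)) ⊗ₜ[k] h - a ⊗ₜ[k] (z * h)}

end WeakHopfAlgebra

/-!
On `A ⊗ H` the formula `(a ⊗ h)(a' ⊗ h') = a(h₁·a') ⊗ h₂h'` defines a bilinear map which is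
already associative: both triple products are images of `Δ²(h)`, once written through
`(Δ ⊗ id)Δ` and once through `(id ⊗ Δ)Δ`. The relations `a(z·1) ⊗ h ~ a ⊗ zh` (`z ∈ H_t`)
are killed on the left because `Δ(zh) = (z ⊗ 1)Δ(h)` and `z·b = (z·1)b`, and respected on the
right because `h·(z·1) = ε_t(hz)·1` and `ε_t(h₁z)h₂ = h ε_t(z)`. Modulo the relations, `1 ⊗ 1`
is a two-sided unit since `1₁ ⊗ ε_t(1₂) = Δ(1)` and `ε_t(h₁)h₂ = h`.
-/

namespace WeakHopfAlgebra

variable {k H : Type*} [CommRing k] [Ring H] [Algebra k H] {W : WeakHopfAlgebra k H}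

section TargetMap

variable (W) in
noncomputable def counitContract (w : H) (M : Type*) [AddCommGroup M] [Module k M] :
    H ⊗[k] M →ₗ[k] M :=
  (TensorProduct.lid k M).toLinearMap ∘ₗ rTensor M (W.counit ∘ₗ LinearMap.mulRight k w)

@[simp] lemma counitContract_tmul (w x : H) {M : Type*} [AddCommGroup M] [Module k M] (m : M) :
    W.counitContract w M (x ⊗ₜ[k] m) = W.counit (x * w) • m := by
  simp [counitContract]

lemma counitContract_one_comul (x : H) : W.counitContract 1 H (W.comul x) = x := by
  simpa [counitContract] using LinearMap.congr_fun W.counit_comul x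

lemma comul_coassoc_apply (x : H) :
    TensorProduct.assoc k H H H (rTensor H W.comul (W.comul x))
      = lTensor H W.comul (W.comul x) :=
  LinearMap.congr_fun W.comul_coassoc x

section SweedlerOne

variable {n : ℕ} {e₁ e₂ : Fin n → H}

lemma εt_eq_sum (he : W.comul 1 = ∑ i, e₁ i ⊗ₜ[k] e₂ i) (w : H) :
    W.εt w = ∑ i, W.counit (e₁ i * w) • e₂ i := by
  simp [εt, he, Finset.sum_mul]

lemma counit_mul_eq_sum (he : W.comul 1 = ∑ i, e₁ i ⊗ₜ[k] e₂ i) (x z : H) :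
    W.counit (x * z) = ∑ i, W.counit (e₁ i * z) * W.counit (x * e₂ i) := by
  simpa [he] using W.counit_mul_right x 1 z

lemma lTensor_comul_comul_one (he : W.comul 1 = ∑ i, e₁ i ⊗ₜ[k] e₂ i) :
    lTensor H W.comul (W.comul 1)
      = ∑ i, ∑ j, e₁ j ⊗ₜ[k] ((e₁ i * e₂ j) ⊗ₜ[k] e₂ i) := by
  rw [← comul_coassoc_apply, W.comul_one_right]
  conv_lhs => rw [he]
  simp only [tmul_sum, map_sum, assoc_symm_tmul, sum_tmul, Finset.sum_mul, Finset.mul_sum,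
    Algebra.TensorProduct.tmul_mul_tmul, one_mul, mul_one, assoc_tmul]
  rw [Finset.sum_comm]

lemma lTensor_comul_comul_one' (he : W.comul 1 = ∑ i, e₁ i ⊗ₜ[k] e₂ i) :
    lTensor H W.comul (W.comul 1)
      = ∑ i, ∑ j, e₁ i ⊗ₜ[k] ((e₂ i * e₁ j) ⊗ₜ[k] e₂ j) := by
  rw [← comul_coassoc_apply, W.comul_one_left]
  conv_lhs => rw [he]
  simp only [tmul_sum, map_sum, assoc_symm_tmul, sum_tmul, Finset.sum_mul, Finset.mul_sum,
    Algebra.TensorProduct.tmul_mul_tmul, one_mul, mul_one, assoc_tmul]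
  rw [Finset.sum_comm]

lemma sum_tmul_εt (he : W.comul 1 = ∑ i, e₁ i ⊗ₜ[k] e₂ i) :
    ∑ i, e₁ i ⊗ₜ[k] W.εt (e₂ i) = W.comul 1 := by
  have h := congrArg (lTensor H (W.counitContract 1 H)) (lTensor_comul_comul_one he)
  conv_lhs at h => rw [he]
  simp only [map_sum, lTensor_tmul, counitContract_one_comul, counitContract_tmul, mul_one,
    tmul_smul] at h
  rw [he, h, Finset.sum_comm]
  simp only [εt_eq_sum he, tmul_sum, tmul_smul]

lemma sum_counit_mul_smul_tmul (he : W.comul 1 = ∑ i, e₁ i ⊗ₜ[k] e₂ i)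
    {m : ℕ} {g₁ g₂ : Fin m → H} {g : H} (hg : W.comul g = ∑ a, g₁ a ⊗ₜ[k] g₂ a) :
    ∑ i, ∑ a, W.counit (g₁ a * e₂ i) • (e₁ i ⊗ₜ[k] g₂ a)
      = ∑ i, e₁ i ⊗ₜ[k] (g * e₂ i) := by
  set E : H ⊗[k] (H ⊗[k] H) := ∑ i, e₁ i ⊗ₜ[k] (e₂ i ⊗ₜ[k] (1 : H))
  -- Both sides are `(1 ⊗ Δ(g)) E` with `ε` applied to the middle factor: computed directly,
  -- and through `Δ(g) = Δ(g)Δ(1)` and `(1 ⊗ Δ(1)) E = Δ²(1)`.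
  have hcomul : ((1 : H) ⊗ₜ[k] W.comul 1) * E = lTensor H W.comul (W.comul 1) := by
    rw [lTensor_comul_comul_one he]
    conv_lhs => rw [he]
    simp only [E, tmul_sum, Finset.sum_mul, Finset.mul_sum,
      Algebra.TensorProduct.tmul_mul_tmul, one_mul, mul_one]
    rw [Finset.sum_comm]
  have hmul : ((1 : H) ⊗ₜ[k] W.comul g) * E = ∑ i, e₁ i ⊗ₜ[k] W.comul (g * e₂ i) := by
    calc ((1 : H) ⊗ₜ[k] W.comul g) * E
        = ((1 : H) ⊗ₜ[k] (W.comul g * W.comul 1)) * E := by rw [← W.comul_mul, mul_one]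
      _ = ((1 : H) ⊗ₜ[k] W.comul g) * lTensor H W.comul (W.comul 1) := by
          rw [← hcomul, ← mul_assoc, Algebra.TensorProduct.tmul_mul_tmul, one_mul]
      _ = ∑ i, e₁ i ⊗ₜ[k] W.comul (g * e₂ i) := by
          conv_lhs => rw [he]
          simp only [map_sum, lTensor_tmul, Finset.mul_sum,
            Algebra.TensorProduct.tmul_mul_tmul, one_mul, ← W.comul_mul]
  have hexp : ((1 : H) ⊗ₜ[k] W.comul g) * E
      = ∑ i, ∑ a, e₁ i ⊗ₜ[k] ((g₁ a * e₂ i) ⊗ₜ[k] g₂ a) := by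
    simp only [E, hg, tmul_sum, Finset.sum_mul, Finset.mul_sum,
      Algebra.TensorProduct.tmul_mul_tmul, one_mul, mul_one]
  have h := congrArg (lTensor H (W.counitContract 1 H)) (hexp.symm.trans hmul)
  simpa only [map_sum, lTensor_tmul, counitContract_tmul, mul_one, counitContract_one_comul,
    tmul_smul] using h

end SweedlerOne

variable {m : ℕ} {g₁ g₂ : Fin m → H} {g : H}

lemma sum_counit_mul_smul (hg : W.comul g = ∑ a, g₁ a ⊗ₜ[k] g₂ a) (w : H) :
    ∑ a, W.counit (g₁ a * w) • g₂ a = g * W.εt w := by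
  obtain ⟨n, e₁, e₂, he⟩ := exists_sum_tmul_eq (W.comul 1)
  have h := congrArg (W.counitContract w H) (sum_counit_mul_smul_tmul he hg)
  simp only [map_sum, map_smul, counitContract_tmul, smul_smul] at h
  calc ∑ a, W.counit (g₁ a * w) • g₂ a
      = ∑ a, ∑ i, (W.counit (e₁ i * w) * W.counit (g₁ a * e₂ i)) • g₂ a :=
        Finset.sum_congr rfl fun a _ => by rw [counit_mul_eq_sum he (g₁ a) w, Finset.sum_smul]
    _ = ∑ i, ∑ a, (W.counit (g₁ a * e₂ i) * W.counit (e₁ i * w)) • g₂ a := by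
        rw [Finset.sum_comm]
        exact Finset.sum_congr rfl fun _ _ => Finset.sum_congr rfl fun _ _ => by rw [mul_comm]
    _ = ∑ i, W.counit (e₁ i * w) • (g * e₂ i) := h
    _ = g * W.εt w := by simp only [εt_eq_sum he, Finset.mul_sum, mul_smul_comm]

lemma sum_εt_mul_mul (hg : W.comul g = ∑ a, g₁ a ⊗ₜ[k] g₂ a) (z : H) :
    ∑ a, W.εt (g₁ a * z) * g₂ a = g * W.εt z := by
  obtain ⟨n, e₁, e₂, he⟩ := exists_sum_tmul_eq (W.comul 1)
  have h : W.counitContract z H (W.comul 1 * W.comul g)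
      = ∑ a, ∑ i, W.counit (e₁ i * (g₁ a * z)) • (e₂ i * g₂ a) := by
    rw [he, hg, Finset.sum_mul_sum, Finset.sum_comm]
    simp only [Algebra.TensorProduct.tmul_mul_tmul, map_sum, counitContract_tmul, mul_assoc]
  rw [← W.comul_mul, one_mul, hg] at h
  simp only [map_sum, counitContract_tmul, sum_counit_mul_smul hg] at h
  rw [h]
  simp only [εt_eq_sum he, Finset.sum_mul, smul_mul_assoc]

lemma mul'_map_εt_mulRight_comul (z g : H) :
    LinearMap.mul' k H
        (TensorProduct.map (W.εt ∘ₗ LinearMap.mulRight k z) LinearMap.id (W.comul g))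
      = g * W.εt z := by
  obtain ⟨m, g₁, g₂, hg⟩ := exists_sum_tmul_eq (W.comul g)
  simp [hg, sum_εt_mul_mul hg]

lemma εt_one : W.εt 1 = 1 := by
  simpa [εt, ← Algebra.TensorProduct.one_def] using LinearMap.congr_fun W.counit_comul 1

lemma sum_εt_mul (hg : W.comul g = ∑ a, g₁ a ⊗ₜ[k] g₂ a) :
    ∑ a, W.εt (g₁ a) * g₂ a = g := by
  simpa only [mul_one, εt_one] using sum_εt_mul_mul hg 1

lemma counit_mul_εt (x w : H) : W.counit (x * W.εt w) = W.counit (x * w) := by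
  obtain ⟨n, e₁, e₂, he⟩ := exists_sum_tmul_eq (W.comul 1)
  simp only [εt_eq_sum he, Finset.mul_sum, mul_smul_comm, map_sum, map_smul, smul_eq_mul,
    ← counit_mul_eq_sum he]

lemma εt_εt (w : H) : W.εt (W.εt w) = W.εt w := by
  obtain ⟨n, e₁, e₂, he⟩ := exists_sum_tmul_eq (W.comul 1)
  simp only [εt_eq_sum he (W.εt w), counit_mul_εt, ← εt_eq_sum he w]

lemma counitContract_lTensor_comul_comul_one (w : H) :
    W.counitContract w (H ⊗[k] H) (lTensor H W.comul (W.comul 1)) = W.comul (W.εt w) := by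
  obtain ⟨n, e₁, e₂, he⟩ := exists_sum_tmul_eq (W.comul 1)
  conv_lhs => rw [he]
  simp only [εt_eq_sum he, map_sum, lTensor_tmul, counitContract_tmul, map_smul]

lemma comul_εt_eq_sum {n : ℕ} {e₁ e₂ : Fin n → H}
    (he : W.comul 1 = ∑ i, e₁ i ⊗ₜ[k] e₂ i) (w : H) :
    W.comul (W.εt w) = ∑ i, (e₁ i * W.εt w) ⊗ₜ[k] e₂ i := by
  rw [← counitContract_lTensor_comul_comul_one, lTensor_comul_comul_one he, εt_eq_sum he]
  simp only [map_sum, counitContract_tmul, Finset.mul_sum, mul_smul_comm, sum_tmul, ← smul_tmul']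

lemma comul_εt_eq_mul (w : H) : W.comul (W.εt w) = (W.εt w ⊗ₜ[k] (1 : H)) * W.comul 1 := by
  obtain ⟨n, e₁, e₂, he⟩ := exists_sum_tmul_eq (W.comul 1)
  rw [← counitContract_lTensor_comul_comul_one, lTensor_comul_comul_one' he, εt_eq_sum he]
  simp only [map_sum, counitContract_tmul, he, Finset.mul_sum, Finset.sum_mul, sum_tmul,
    ← smul_tmul', Algebra.TensorProduct.tmul_mul_tmul, one_mul, smul_mul_assoc]
  rw [Finset.sum_comm]

lemma comul_εt_mul (w x : H) :
    W.comul (W.εt w * x) = (W.εt w ⊗ₜ[k] (1 : H)) * W.comul x := by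
  rw [W.comul_mul, comul_εt_eq_mul, mul_assoc, ← W.comul_mul, one_mul]

end TargetMap

section Smash

variable {A : Type*} [Ring A] [Algebra k A] {act : H →ₗ[k] A →ₗ[k] A}

variable (act) in
noncomputable def actTensor : (H ⊗[k] H) →ₗ[k] (A ⊗[k] H) →ₗ[k] (A ⊗[k] H) :=
  TensorProduct.homTensorHomMap (RingHom.id k) A H A H ∘ₗ
    TensorProduct.map act (LinearMap.mul k H)

@[simp] lemma actTensor_tmul_tmul (u v : H) (a : A) (h : H) :
    actTensor act (u ⊗ₜ[k] v) (a ⊗ₜ[k] h) = act u a ⊗ₜ[k] (v * h) := by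
  simp [actTensor]

variable (W act) in
noncomputable def smashMul : (A ⊗[k] H) →ₗ[k] (A ⊗[k] H) →ₗ[k] (A ⊗[k] H) :=
  TensorProduct.lift ((LinearMap.llcomp k (A ⊗[k] H) (A ⊗[k] H) (A ⊗[k] H)).compl₁₂
    (LinearMap.rTensorHom H ∘ₗ LinearMap.mul k A) (actTensor act ∘ₗ W.comul))

lemma smashMul_tmul (a : A) (h : H) (y : A ⊗[k] H) :
    W.smashMul act (a ⊗ₜ[k] h) y
      = rTensor H (LinearMap.mul k A a) (actTensor act (W.comul h) y) := by
  simp [smashMul]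

lemma smashMul_tmul_tmul {n : ℕ} {h₁ h₂ : Fin n → H} {h : H}
    (hh : W.comul h = ∑ i, h₁ i ⊗ₜ[k] h₂ i) (a a' : A) (h' : H) :
    W.smashMul act (a ⊗ₜ[k] h) (a' ⊗ₜ[k] h')
      = ∑ i, (a * act (h₁ i) a') ⊗ₜ[k] (h₂ i * h') := by
  simp [smashMul_tmul, hh]

variable (act) in
noncomputable def actMul (a c : A) : H ⊗[k] H →ₗ[k] A :=
  TensorProduct.lift ((LinearMap.mul k A).compl₁₂ (act.flip a) (act.flip c))

@[simp] lemma actMul_tmul (a c : A) (x y : H) :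
    actMul act a c (x ⊗ₜ[k] y) = act x a * act y c := by
  simp [actMul]

lemma rTensor_mul_actTensor (a a' c : A) (d x : H) (t : H ⊗[k] H) :
    rTensor H (LinearMap.mul k A (a * act x a')) (actTensor act t (c ⊗ₜ[k] d))
      = TensorProduct.map (LinearMap.mul k A a ∘ₗ actMul act a' c) (LinearMap.mulRight k d)
          ((TensorProduct.assoc k H H H).symm (x ⊗ₜ[k] t)) := by
  induction t using TensorProduct.induction_on with
  | zero => simp
  | add t₁ t₂ h₁ h₂ => simp only [tmul_add, map_add, LinearMap.add_apply, h₁, h₂]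
  | tmul y z => simp [mul_assoc]

variable (W act) in
noncomputable abbrev smashMk :
    A ⊗[k] H →ₗ[k] A ⊗[k] H ⧸ W.smashRel (LinearMap.mul k A) 1 act :=
  (W.smashRel (LinearMap.mul k A) 1 act).mkQ

lemma smashMk_mul_act_εt_one_tmul (a : A) (h w : H) :
    W.smashMk act ((a * act (W.εt w) 1) ⊗ₜ[k] h) = W.smashMk act (a ⊗ₜ[k] (W.εt w * h)) :=
  (Submodule.Quotient.eq _).2 (Submodule.subset_span ⟨a, h, W.εt w, ⟨w, rfl⟩, rfl⟩)

section ModuleAlgebra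

variable
  (hact_mul : ∀ (h h' : H) (a : A), act (h * h') a = act h (act h' a))
  (hact_one : ∀ a : A, act 1 a = a)
  (hma_mul : ∀ (h : H) (a b : A) (n : ℕ) (h1 h2 : Fin n → H),
      W.comul h = ∑ i, h1 i ⊗ₜ[k] h2 i → act h (a * b) = ∑ i, act (h1 i) a * act (h2 i) b)
  (hma_one : ∀ h : H, act h 1 = act (W.εt h) 1)

include hact_mul in
lemma actTensor_mul_comul {m : ℕ} {r s : Fin m → H} {h' : H}
    (hr : W.comul h' = ∑ b, r b ⊗ₜ[k] s b) (t : H ⊗[k] H) (a : A) (h : H) :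
    actTensor act (t * W.comul h') (a ⊗ₜ[k] h)
      = ∑ b, actTensor act t (act (r b) a ⊗ₜ[k] (s b * h)) := by
  induction t using TensorProduct.induction_on with
  | zero => simp
  | add t₁ t₂ h₁ h₂ =>
    simp only [add_mul, map_add, LinearMap.add_apply, h₁, h₂, Finset.sum_add_distrib]
  | tmul x y =>
    simp only [hr, Finset.mul_sum, Algebra.TensorProduct.tmul_mul_tmul, map_sum,
      LinearMap.sum_apply, actTensor_tmul_tmul, hact_mul, mul_assoc]

include hma_mul in
lemma act_mul_eq_actMul (g : H) (a c : A) : act g (a * c) = actMul act a c (W.comul g) := by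
  obtain ⟨n, g₁, g₂, hg⟩ := exists_sum_tmul_eq (W.comul g)
  simp [hma_mul g a c n g₁ g₂ hg, hg]

include hma_mul in
lemma smashMul_tmul_mul_tmul (a a' c : A) (h h' : H) :
    W.smashMul act (a ⊗ₜ[k] h) ((a' * c) ⊗ₜ[k] h')
      = TensorProduct.map (LinearMap.mul k A a ∘ₗ actMul act a' c) (LinearMap.mulRight k h')
          (rTensor H W.comul (W.comul h)) := by
  obtain ⟨n, u, v, hu⟩ := exists_sum_tmul_eq (W.comul h)
  simp [smashMul_tmul, hu, act_mul_eq_actMul hma_mul]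

include hact_mul hact_one hma_mul in
lemma act_εt_eq_mul (w : H) (b : A) : act (W.εt w) b = act (W.εt w) 1 * b := by
  obtain ⟨n, e₁, e₂, he⟩ := exists_sum_tmul_eq (W.comul 1)
  calc act (W.εt w) b = act (W.εt w) (1 * b) := by rw [one_mul]
    _ = ∑ i, act (e₁ i * W.εt w) 1 * act (e₂ i) b :=
        hma_mul _ 1 b _ _ _ (comul_εt_eq_sum he w)
    _ = ∑ i, act (e₁ i) (act (W.εt w) 1) * act (e₂ i) b := by simp only [hact_mul]
    _ = act 1 (act (W.εt w) 1 * b) := (hma_mul 1 _ b _ e₁ e₂ he).symm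
    _ = act (W.εt w) 1 * b := hact_one _

include hact_mul hma_mul in
lemma smashMul_assoc_tmul (a a' a'' : A) (h h' h'' : H) :
    W.smashMul act (W.smashMul act (a ⊗ₜ[k] h) (a' ⊗ₜ[k] h')) (a'' ⊗ₜ[k] h'')
      = W.smashMul act (a ⊗ₜ[k] h) (W.smashMul act (a' ⊗ₜ[k] h') (a'' ⊗ₜ[k] h'')) := by
  obtain ⟨m, u, v, hu⟩ := exists_sum_tmul_eq (W.comul h)
  obtain ⟨n, r, s, hr⟩ := exists_sum_tmul_eq (W.comul h')
  set T : Fin n → (H ⊗[k] H) ⊗[k] H →ₗ[k] A ⊗[k] H := fun b =>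
    TensorProduct.map (LinearMap.mul k A a ∘ₗ actMul act a' (act (r b) a''))
      (LinearMap.mulRight k (s b * h''))
  have hleft : W.smashMul act (W.smashMul act (a ⊗ₜ[k] h) (a' ⊗ₜ[k] h')) (a'' ⊗ₜ[k] h'')
      = ∑ b, T b ((TensorProduct.assoc k H H H).symm (lTensor H W.comul (W.comul h))) := by
    rw [smashMul_tmul_tmul hu, map_sum, LinearMap.sum_apply, hu]
    simp only [smashMul_tmul, W.comul_mul, actTensor_mul_comul hact_mul hr, map_sum,
      rTensor_mul_actTensor, lTensor_tmul, T]
    exact Finset.sum_comm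
  have hright :
      W.smashMul act (a ⊗ₜ[k] h) (W.smashMul act (a' ⊗ₜ[k] h') (a'' ⊗ₜ[k] h''))
        = ∑ b, T b (rTensor H W.comul (W.comul h)) := by
    simp only [smashMul_tmul_tmul hr, map_sum, smashMul_tmul_mul_tmul hma_mul, T]
  rw [hleft, hright, ← comul_coassoc_apply, LinearEquiv.symm_apply_apply]

include hact_mul hma_mul in
lemma smashMul_assoc (x y z : A ⊗[k] H) :
    W.smashMul act (W.smashMul act x y) z = W.smashMul act x (W.smashMul act y z) := by
  induction x using TensorProduct.induction_on <;>
    induction y using TensorProduct.induction_on <;>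
    induction z using TensorProduct.induction_on <;>
    simp_all [smashMul_assoc_tmul hact_mul hma_mul]

include hact_mul hact_one hma_mul in
lemma smashMul_mul_act_εt_one_tmul (a : A) (h w : H) :
    W.smashMul act ((a * act (W.εt w) 1) ⊗ₜ[k] h)
      = W.smashMul act (a ⊗ₜ[k] (W.εt w * h)) := by
  refine TensorProduct.ext' fun a' h' => ?_
  obtain ⟨n, u, v, hu⟩ := exists_sum_tmul_eq (W.comul h)
  have hwu : W.comul (W.εt w * h) = ∑ i, (W.εt w * u i) ⊗ₜ[k] v i := by
    simp [comul_εt_mul, hu, Finset.mul_sum]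
  rw [smashMul_tmul_tmul hu, smashMul_tmul_tmul hwu]
  refine Finset.sum_congr rfl fun i _ => ?_
  rw [hact_mul, act_εt_eq_mul hact_mul hact_one hma_mul w (act (u i) a'), mul_assoc]

include hact_mul hma_mul hma_one in
lemma smashMk_smashMul_tmul_mul_act_εt_one_tmul (a a' : A) (h h' w : H) :
    W.smashMk act (W.smashMul act (a ⊗ₜ[k] h) ((a' * act (W.εt w) 1) ⊗ₜ[k] h'))
      = W.smashMk act (W.smashMul act (a ⊗ₜ[k] h) (a' ⊗ₜ[k] (W.εt w * h'))) := by
  set Om := TensorProduct.map (LinearMap.mul k A a ∘ₗ act.flip a')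
    (LinearMap.mulRight k h' ∘ₗ LinearMap.mul' k H ∘ₗ
      TensorProduct.map (W.εt ∘ₗ LinearMap.mulRight k (W.εt w)) LinearMap.id)
  -- `y·(ε_t(w)·1) = ε_t(y ε_t(w))·1`, and the relation moves this factor across `⊗`
  have hrel : W.smashMk act ∘ₗ
        TensorProduct.map (LinearMap.mul k A a ∘ₗ actMul act a' (act (W.εt w) 1))
          (LinearMap.mulRight k h')
      = W.smashMk act ∘ₗ Om ∘ₗ (TensorProduct.assoc k H H H).toLinearMap := by
    refine TensorProduct.ext_threefold fun x y z => ?_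
    simp only [LinearMap.comp_apply, TensorProduct.map_tmul, actMul_tmul, LinearEquiv.coe_coe,
      assoc_tmul, Om, flip_apply, mul_apply', mulRight_apply, mul'_apply, LinearMap.id_apply]
    rw [← hact_mul, hma_one, ← mul_assoc, smashMk_mul_act_εt_one_tmul, mul_assoc]
  have hOm : Om (lTensor H W.comul (W.comul h))
      = W.smashMul act (a ⊗ₜ[k] h) (a' ⊗ₜ[k] (W.εt w * h')) := by
    obtain ⟨n, u, v, hu⟩ := exists_sum_tmul_eq (W.comul h)
    rw [smashMul_tmul_tmul hu, hu]
    simp [Om, mul'_map_εt_mulRight_comul, εt_εt, mul_assoc]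
  rw [smashMul_tmul_mul_tmul hma_mul, ← hOm, ← comul_coassoc_apply]
  exact LinearMap.congr_fun hrel _

include hact_mul hact_one hma_mul in
lemma smashRel_le_ker :
    W.smashRel (LinearMap.mul k A) 1 act
      ≤ LinearMap.ker ((W.smashMul act).compr₂ (W.smashMk act)) := by
  refine Submodule.span_le.2 ?_
  rintro _ ⟨a, h, _, ⟨w, rfl⟩, rfl⟩
  rw [SetLike.mem_coe, LinearMap.mem_ker, map_sub, sub_eq_zero, mul_apply']
  refine LinearMap.ext fun y => ?_
  rw [compr₂_apply, compr₂_apply, smashMul_mul_act_εt_one_tmul hact_mul hact_one hma_mul]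

include hact_mul hma_mul hma_one in
lemma smashRel_le_ker_flip :
    W.smashRel (LinearMap.mul k A) 1 act
      ≤ LinearMap.ker ((W.smashMul act).compr₂ (W.smashMk act)).flip := by
  refine Submodule.span_le.2 ?_
  rintro _ ⟨a', h', _, ⟨w, rfl⟩, rfl⟩
  rw [SetLike.mem_coe, LinearMap.mem_ker]
  refine TensorProduct.ext' fun a h => ?_
  rw [map_sub, LinearMap.sub_apply, flip_apply, flip_apply, compr₂_apply, compr₂_apply,
    mul_apply', smashMk_smashMul_tmul_mul_act_εt_one_tmul hact_mul hma_mul hma_one, sub_self,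
    LinearMap.zero_apply]

include hact_one hma_mul hma_one in
lemma smashMk_comp_smashMul_one_tmul_one :
    W.smashMk act ∘ₗ W.smashMul act ((1 : A) ⊗ₜ[k] (1 : H)) = W.smashMk act := by
  refine TensorProduct.ext' fun a h => ?_
  obtain ⟨n, e₁, e₂, he⟩ := exists_sum_tmul_eq (W.comul 1)
  have hunit : ∑ i, act (e₁ i) a * act (W.εt (e₂ i)) 1 = a := by
    simp only [← hma_one]
    rw [← hma_mul 1 a 1 n e₁ e₂ he, mul_one, hact_one]
  rw [LinearMap.comp_apply, smashMul_tmul_tmul (sum_tmul_εt he).symm, map_sum]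
  simp only [one_mul, ← smashMk_mul_act_εt_one_tmul]
  rw [← map_sum, ← sum_tmul, hunit]

include hma_one in
lemma smashMk_comp_flip_smashMul_one_tmul_one :
    W.smashMk act ∘ₗ (W.smashMul act).flip ((1 : A) ⊗ₜ[k] (1 : H)) = W.smashMk act := by
  refine TensorProduct.ext' fun a h => ?_
  obtain ⟨n, u, v, hu⟩ := exists_sum_tmul_eq (W.comul h)
  have hrel : ∀ i, W.smashMk act ((a * act (u i) 1) ⊗ₜ[k] (v i * 1))
      = W.smashMk act (a ⊗ₜ[k] (W.εt (u i) * v i)) := fun i => by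
    rw [mul_one, hma_one, smashMk_mul_act_εt_one_tmul]
  rw [LinearMap.comp_apply, flip_apply, smashMul_tmul_tmul hu, map_sum,
    Finset.sum_congr rfl fun i _ => hrel i, ← map_sum, ← tmul_sum, sum_εt_mul hu]

end ModuleAlgebra

end Smash

end WeakHopfAlgebra

open WeakHopfAlgebra in
/-- Let `H` be a weak Hopf algebra and `A` a left `H`-module algebra.  Then the smash product
`A # H := A ⊗_{H_t} H`, with multiplication `(a # h)(a' # h') = a(h₁·a') # h₂h'` and unit
`1_A # 1_H`, is a unital associative algebra.  The multiplication is described on classes of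
pure tensors through arbitrary finite Sweedler representations of `Δ(h)`. -/
theorem weakHopf_smash_product_algebra {k H : Type*} [CommRing k] [Ring H] [Algebra k H]
    (W : WeakHopfAlgebra k H) {A : Type*} [Ring A] [Algebra k A]
    (act : H →ₗ[k] A →ₗ[k] A)
    -- `A` is a left `H`-module:
    (hact_mul : ∀ (h h' : H) (a : A), act (h * h') a = act h (act h' a))
    (hact_one : ∀ a : A, act 1 a = a)
    -- `A` is a left `H`-module algebra:
    (hma_mul : ∀ (h : H) (a b : A) (n : ℕ) (h1 h2 : Fin n → H),
      W.comul h = ∑ i, h1 i ⊗ₜ[k] h2 i →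
      act h (a * b) = ∑ i, act (h1 i) a * act (h2 i) b)
    (hma_one : ∀ h : H, act h 1 = act (W.εt h) 1) :
    letI rel := W.smashRel (LinearMap.mul k A) (1 : A) act
    ∃ m : ((A ⊗[k] H) ⧸ rel) →ₗ[k] ((A ⊗[k] H) ⧸ rel) →ₗ[k] ((A ⊗[k] H) ⧸ rel),
      -- description of the multiplication `(a # h)(a' # h') = a(h₁·a') # h₂h'`:
      (∀ (a a' : A) (h h' : H) (n : ℕ) (h1 h2 : Fin n → H),
        W.comul h = ∑ i, h1 i ⊗ₜ[k] h2 i →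
        m (rel.mkQ (a ⊗ₜ[k] h)) (rel.mkQ (a' ⊗ₜ[k] h'))
          = rel.mkQ (∑ i, (a * act (h1 i) a') ⊗ₜ[k] (h2 i * h'))) ∧
      -- associativity:
      (∀ x y z, m (m x y) z = m x (m y z)) ∧
      -- `1_A # 1_H` is a unit:
      (∀ x, m (rel.mkQ ((1 : A) ⊗ₜ[k] (1 : H))) x = x) ∧
      (∀ x, m x (rel.mkQ ((1 : A) ⊗ₜ[k] (1 : H))) = x) := by
  refine ⟨((W.smashMul act).compr₂ (W.smashMk act)).liftQ₂ _ _
    (smashRel_le_ker hact_mul hact_one hma_mul) (smashRel_le_ker_flip hact_mul hma_mul hma_one),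
    ?_, ?_, ?_, ?_⟩
  · intro a a' h h' n h1 h2 hh
    exact congrArg (W.smashMk act) (smashMul_tmul_tmul hh a a' h')
  · rintro ⟨x⟩ ⟨y⟩ ⟨z⟩
    exact congrArg (W.smashMk act) (smashMul_assoc hact_mul hma_mul x y z)
  · rintro ⟨x⟩
    exact LinearMap.congr_fun (smashMk_comp_smashMul_one_tmul_one hact_one hma_mul hma_one) x
  · rintro ⟨x⟩
    exact LinearMap.congr_fun (smashMk_comp_flip_smashMul_one_tmul_one hma_one) x
end

section
/- Let H be a quasi-bialgebra and A an object of the category of left-left Yetter–Drinfeld modules over H which is also a left H-module algebra. If the map λ : A # H → H ⊗ (A # H), λ(a # h) = T¹(t¹·a)⁽⁻¹⁾t²h₁ ⊗ (T²·(t¹·a)⁽⁰⁾ # T³t³h₂) (where Φ = T¹⊗T²⊗T³ and Φ⁻¹ = t¹⊗t²⊗t³) is an algebra map, then A is an algebra in the category of Yetter–Drinfeld modules; in particular λ_A(aa') = X¹(x¹Y¹·a)⁽⁻¹⁾x²(Y²·a')⁽⁻¹⁾Y³ ⊗ [X²·(x¹Y¹·a)⁽⁰⁾][X³x³·(Y²·a')⁽⁰⁾].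 -/
/-!
Write `π = id ⊗ ε : A # H → A`. Since `(id ⊗ id ⊗ ε)(Φ) = (id ⊗ id ⊗ ε)(Φ⁻¹) = 1 ⊗ 1` and
`(id ⊗ ε)Δ = id`, `(id ⊗ π) λ(a # h) = a⁽⁻¹⁾h ⊗ a⁽⁰⁾`; with `λ(1 # 1) = 1 ⊗ (1 # 1)` this gives
`λ_A(1) = 1 ⊗ 1`. Moreover `π(x y) = x ▹ π(y)` for `(a # h) ▹ c = a (h·c)`. Evaluating
`(id ⊗ π) λ((a # 1)(a' # 1))` once through the smash product formula and once as
`λ(a # 1) λ(a' # 1)` yields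
`λ_A((x¹·a)(x²·a')) x³ = X¹(x¹·a)⁽⁻¹⁾x²a'⁽⁻¹⁾ ⊗ (X²·(x¹·a)⁽⁰⁾)(X³x³·a'⁽⁰⁾)`,
and inserting `Φ⁻¹Φ = 1` in front of `a ⊗ a'` turns this into the formula for `λ_A(aa')`.
-/

open TensorProduct LinearMap

/-- A quasi-bialgebra in the sense of Drinfeld: an associative unital algebra `H` with algebra
maps `Δ : H → H ⊗ H` and `ε : H → k` and an invertible associator `Φ ∈ H ⊗ H ⊗ H` such that
`Δ` is quasi-coassociative (coassociative up to conjugation by `Φ`), `ε` is a counit, `Φ`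
satisfies the pentagon identity and the counit conditions. -/
structure QuasiBialgebra (k H : Type*) [CommRing k] [Ring H] [Algebra k H] where
  comul : H →ₗ[k] H ⊗[k] H
  counit : H →ₗ[k] k
  assoc3 : (H ⊗[k] H) ⊗[k] H
  assoc3Inv : (H ⊗[k] H) ⊗[k] H
  assoc3_mul_inv : assoc3 * assoc3Inv = 1
  inv_mul_assoc3 : assoc3Inv * assoc3 = 1
  comul_mul : ∀ x y : H, comul (x * y) = comul x * comul y
  comul_one : comul 1 = 1
  counit_mul : ∀ x y : H, counit (x * y) = counit x * counit y
  counit_one : counit 1 = 1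
  quasi_coassoc : ∀ h : H,
    (TensorProduct.assoc k H H H).symm ((LinearMap.lTensor H comul) (comul h))
      = assoc3 * ((LinearMap.rTensor H comul) (comul h)) * assoc3Inv
  counit_comul : (TensorProduct.lid k H).toLinearMap ∘ₗ
      (LinearMap.rTensor H counit) ∘ₗ comul = LinearMap.id
  comul_counit : (TensorProduct.rid k H).toLinearMap ∘ₗ
      (LinearMap.lTensor H counit) ∘ₗ comul = LinearMap.id
  pentagon :
    ((LinearMap.rTensor H (TensorProduct.assoc k H H H).symm.toLinearMap)
        ((TensorProduct.assoc k H (H ⊗[k] H) H).symm ((1 : H) ⊗ₜ[k] assoc3)))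
      * ((LinearMap.rTensor H (TensorProduct.assoc k H H H).symm.toLinearMap)
          ((LinearMap.rTensor H (LinearMap.lTensor H comul)) assoc3))
      * (assoc3 ⊗ₜ[k] (1 : H))
    = ((TensorProduct.assoc k (H ⊗[k] H) H H).symm
          ((LinearMap.lTensor (H ⊗[k] H) comul) assoc3))
      * ((LinearMap.rTensor H (LinearMap.rTensor H comul)) assoc3)
  counit_assoc3_1 : (LinearMap.rTensor H
      ((TensorProduct.lid k H).toLinearMap ∘ₗ LinearMap.rTensor H counit)) assoc3 = 1
  counit_assoc3_2 : (LinearMap.rTensor H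
      ((TensorProduct.rid k H).toLinearMap ∘ₗ LinearMap.lTensor H counit)) assoc3 = 1
  counit_assoc3_3 : (TensorProduct.rid k (H ⊗[k] H))
      ((LinearMap.lTensor (H ⊗[k] H) counit) assoc3) = 1

/-- A quasi-Hopf algebra: a quasi-bialgebra together with an algebra anti-automorphism `S`
and elements `α, β` satisfying `S(h₁)αh₂ = ε(h)α`, `h₁βS(h₂) = ε(h)β` and
`X¹βS(X²)αX³ = 1 = S(x¹)αx²βS(x³)`. -/
structure QuasiHopfAlgebra (k H : Type*) [CommRing k] [Ring H] [Algebra k H] extends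
    QuasiBialgebra k H where
  antipode : H →ₗ[k] H
  antipode_bijective : Function.Bijective antipode
  antipode_mul : ∀ x y : H, antipode (x * y) = antipode y * antipode x
  antipode_one : antipode 1 = 1
  el_α : H
  el_β : H
  antipode_α : ∀ h : H,
    LinearMap.mul' k H ((LinearMap.rTensor H
        (LinearMap.mulRight k el_α ∘ₗ antipode)) (comul h)) = counit h • el_α
  antipode_β : ∀ h : H,
    LinearMap.mul' k H ((LinearMap.lTensor H
        (LinearMap.mulLeft k el_β ∘ₗ antipode)) (comul h)) = counit h • el_β
  assoc3_antipode_1 :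
    LinearMap.mul' k H ((LinearMap.rTensor H (LinearMap.mul' k H ∘ₗ
        TensorProduct.map (LinearMap.mulRight k el_β)
          (LinearMap.mulRight k el_α ∘ₗ antipode))) assoc3) = 1
  assoc3_antipode_2 :
    LinearMap.mul' k H ((LinearMap.lTensor H antipode)
      ((LinearMap.rTensor H (LinearMap.mul' k H ∘ₗ
        TensorProduct.map (LinearMap.mulRight k el_α ∘ₗ antipode)
          (LinearMap.mulRight k el_β))) assoc3Inv)) = 1

section FinRepresentation

variable {k M N P : Type*} [CommRing k] [AddCommGroup M] [Module k M] [AddCommGroup N]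
  [Module k N] [AddCommGroup P] [Module k P]

theorem TensorProduct.exists_fin_sum_tmul (z : M ⊗[k] N) :
    ∃ (n : ℕ) (u : Fin n → M) (v : Fin n → N), z = ∑ i, u i ⊗ₜ[k] v i := by
  obtain ⟨S, rfl⟩ := TensorProduct.exists_finset z
  refine ⟨S.card, fun i => (S.equivFin.symm i).1.1, fun i => (S.equivFin.symm i).1.2, ?_⟩
  rw [← Finset.sum_coe_sort S, ← S.equivFin.symm.sum_comp]

theorem TensorProduct.exists_fin_sum_tmul_family {ι : Type*} [Fintype ι] [DecidableEq ι]
    (z : ι → M ⊗[k] N) :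
    ∃ (n : ℕ) (u : ι → Fin n → M) (v : ι → Fin n → N),
      ∀ i, z i = ∑ r, u i r ⊗ₜ[k] v i r := by
  obtain ⟨n, u, v, huv⟩ :=
    TensorProduct.exists_fin_sum_tmul ((TensorProduct.piLeft k N fun _ : ι => M).symm z)
  refine ⟨n, fun i r => u r i, fun _ r => v r, fun i => ?_⟩
  simpa using congrFun (congrArg (TensorProduct.piLeft k N fun _ : ι => M) huv) i

theorem TensorProduct.exists_fin_sum_tmul_tmul (z : (M ⊗[k] N) ⊗[k] P) :
    ∃ (n : ℕ) (u : Fin n → M) (v : Fin n → N) (w : Fin n → P),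
      z = ∑ i, (u i ⊗ₜ[k] v i) ⊗ₜ[k] w i := by
  obtain ⟨n, m, w, rfl⟩ := TensorProduct.exists_fin_sum_tmul z
  obtain ⟨K, u, v, huv⟩ := TensorProduct.exists_fin_sum_tmul_family m
  refine ⟨n * K, fun q => u (finProdFinEquiv.symm q).1 (finProdFinEquiv.symm q).2,
    fun q => v (finProdFinEquiv.symm q).1 (finProdFinEquiv.symm q).2,
    fun q => w (finProdFinEquiv.symm q).1, ?_⟩
  rw [finProdFinEquiv.symm.sum_comp (fun p => (u p.1 p.2 ⊗ₜ[k] v p.1 p.2) ⊗ₜ[k] w p.1),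
    Fintype.sum_prod_type]
  simp_rw [huv, TensorProduct.sum_tmul]

end FinRepresentation

namespace QuasiBialgebra

variable {k H : Type*} [CommRing k] [Ring H] [Algebra k H] (W : QuasiBialgebra k H)

noncomputable def counitAlgHom : H →ₐ[k] k :=
  AlgHom.ofLinearMap W.counit W.counit_one W.counit_mul

noncomputable def counitThird : (H ⊗[k] H) ⊗[k] H →ₐ[k] H ⊗[k] H :=
  (Algebra.TensorProduct.rid k k (H ⊗[k] H)).toAlgHom.comp
    (Algebra.TensorProduct.map (AlgHom.id k (H ⊗[k] H)) W.counitAlgHom)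

@[simp]
theorem counitThird_tmul (m : H ⊗[k] H) (w : H) :
    W.counitThird (m ⊗ₜ[k] w) = W.counit w • m := by
  simp [counitThird, counitAlgHom]

theorem counitThird_assoc3 : W.counitThird W.assoc3 = 1 := by
  have : W.counitThird.toLinearMap =
      (TensorProduct.rid k (H ⊗[k] H)).toLinearMap ∘ₗ lTensor (H ⊗[k] H) W.counit := by
    ext; simp
  simpa using (LinearMap.congr_fun this W.assoc3).trans W.counit_assoc3_3

theorem counitThird_assoc3Inv : W.counitThird W.assoc3Inv = 1 := by
  simpa [W.counitThird_assoc3] using congrArg W.counitThird W.inv_mul_assoc3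

variable {M : Type*} [AddCommGroup M] [Module k M]

theorem sum_counit_smul_eq_of_counitThird {z : (H ⊗[k] H) ⊗[k] H} (hz : W.counitThird z = 1)
    (f : H →ₗ[k] H →ₗ[k] M) {n : ℕ} {u v w : Fin n → H}
    (huvw : z = ∑ i, (u i ⊗ₜ[k] v i) ⊗ₜ[k] w i) :
    ∑ i, W.counit (w i) • f (u i) (v i) = f 1 1 := by
  simpa [huvw, Algebra.TensorProduct.one_def] using congrArg (TensorProduct.lift f) hz

theorem sum_counit_smul_comul (g : H →ₗ[k] M) {h : H} {n : ℕ} {h1 h2 : Fin n → H}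
    (hh : W.comul h = ∑ i, h1 i ⊗ₜ[k] h2 i) :
    ∑ i, W.counit (h2 i) • g (h1 i) = g h := by
  simpa [hh] using congrArg g (LinearMap.congr_fun W.comul_counit h)

theorem sum_apply_assoc3Inv_mul_assoc3 (F : (H ⊗[k] H) ⊗[k] H →ₗ[k] M) {n m : ℕ}
    {x1 x2 x3 : Fin n → H} {Y1 Y2 Y3 : Fin m → H}
    (hx : W.assoc3Inv = ∑ j, (x1 j ⊗ₜ[k] x2 j) ⊗ₜ[k] x3 j)
    (hY : W.assoc3 = ∑ l, (Y1 l ⊗ₜ[k] Y2 l) ⊗ₜ[k] Y3 l) :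
    ∑ j, ∑ l, F (((x1 j * Y1 l) ⊗ₜ[k] (x2 j * Y2 l)) ⊗ₜ[k] (x3 j * Y3 l)) = F 1 := by
  rw [← W.inv_mul_assoc3, hx, hY, Finset.sum_mul_sum]
  simp [Algebra.TensorProduct.tmul_mul_tmul]

end QuasiBialgebra

section SmashProduct

variable {k H A : Type*} [CommRing k] [Ring H] [Algebra k H] [AddCommGroup A] [Module k A]

/-- `(a # h)(a' # h') = (x¹·a)(x²h₁·a') # x³h₂h'`, for all representations of `Φ⁻¹` and `Δ(h)`. -/
def IsSmashMul (W : QuasiBialgebra k H) (mulA : A →ₗ[k] A →ₗ[k] A) (act : H →ₗ[k] A →ₗ[k] A)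
    (msm : (A ⊗[k] H) →ₗ[k] (A ⊗[k] H) →ₗ[k] (A ⊗[k] H)) : Prop :=
  ∀ (a a' : A) (h h' : H) (n p : ℕ) (x1 x2 x3 : Fin n → H) (h1 h2 : Fin p → H),
    W.assoc3Inv = ∑ i, (x1 i ⊗ₜ[k] x2 i) ⊗ₜ[k] x3 i →
    W.comul h = ∑ j, h1 j ⊗ₜ[k] h2 j →
    msm (a ⊗ₜ[k] h) (a' ⊗ₜ[k] h')
      = ∑ i, ∑ j, mulA (act (x1 i) a) (act (x2 i * h1 j) a') ⊗ₜ[k] (x3 i * h2 j * h')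

/-- `λ(a # h) = T¹(t¹·a)⁽⁻¹⁾t²h₁ ⊗ (T²·(t¹·a)⁽⁰⁾ # T³t³h₂)`, for all representations of the
tensors involved. -/
def IsSmashCoaction (W : QuasiBialgebra k H) (act : H →ₗ[k] A →ₗ[k] A)
    (coact : A →ₗ[k] H ⊗[k] A) (lamsm : (A ⊗[k] H) →ₗ[k] H ⊗[k] (A ⊗[k] H)) : Prop :=
  ∀ (a : A) (h : H) (nT nt p K : ℕ)
    (T1 T2 T3 : Fin nT → H) (t1 t2 t3 : Fin nt → H) (h1 h2 : Fin p → H)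
    (c1 : Fin nt → Fin K → H) (c0 : Fin nt → Fin K → A),
    W.assoc3 = ∑ i, (T1 i ⊗ₜ[k] T2 i) ⊗ₜ[k] T3 i →
    W.assoc3Inv = ∑ i, (t1 i ⊗ₜ[k] t2 i) ⊗ₜ[k] t3 i →
    W.comul h = ∑ j, h1 j ⊗ₜ[k] h2 j →
    (∀ i, coact (act (t1 i) a) = ∑ r, c1 i r ⊗ₜ[k] c0 i r) →
    lamsm (a ⊗ₜ[k] h)
      = ∑ i, ∑ i', ∑ r, ∑ j, (T1 i * c1 i' r * t2 i' * h1 j) ⊗ₜ[k]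
          (act (T2 i) (c0 i' r) ⊗ₜ[k] (T3 i * t3 i' * h2 j))

variable (k H A) in
noncomputable def rTensorMulRight : H →ₗ[k] H ⊗[k] A →ₗ[k] H ⊗[k] A :=
  rTensorHom A ∘ₗ (LinearMap.mul k H).flip

@[simp]
theorem rTensorMulRight_apply (w : H) : rTensorMulRight k H A w = rTensor A (mulRight k w) :=
  rfl

variable (A) in
noncomputable def QuasiBialgebra.counitRight (W : QuasiBialgebra k H) : A ⊗[k] H →ₗ[k] A :=
  (TensorProduct.rid k A).toLinearMap ∘ₗ lTensor A W.counit

@[simp]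
theorem QuasiBialgebra.counitRight_tmul (W : QuasiBialgebra k H) (a : A) (h : H) :
    W.counitRight A (a ⊗ₜ[k] h) = W.counit h • a := by
  simp [QuasiBialgebra.counitRight]

noncomputable def smashAct (mulA : A →ₗ[k] A →ₗ[k] A) (act : H →ₗ[k] A →ₗ[k] A) :
    A ⊗[k] H →ₗ[k] A →ₗ[k] A :=
  TensorProduct.lift ((llcomp k A A A).compl₁₂ mulA act)

@[simp]
theorem smashAct_tmul (mulA : A →ₗ[k] A →ₗ[k] A) (act : H →ₗ[k] A →ₗ[k] A) (a c : A) (h : H) :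
    smashAct mulA act (a ⊗ₜ[k] h) c = mulA a (act h c) :=
  rfl

variable {W : QuasiBialgebra k H} {mulA : A →ₗ[k] A →ₗ[k] A} {act : H →ₗ[k] A →ₗ[k] A}
  {msm : (A ⊗[k] H) →ₗ[k] (A ⊗[k] H) →ₗ[k] (A ⊗[k] H)}

theorem counitRight_smashMul (hact_one : ∀ a : A, act 1 a = a) (hmsm : IsSmashMul W mulA act msm)
    (x y : A ⊗[k] H) : W.counitRight A (msm x y) = smashAct mulA act x (W.counitRight A y) := by
  suffices msm.compr₂ (W.counitRight A) = (smashAct mulA act).compl₂ (W.counitRight A) from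
    LinearMap.congr_fun₂ this x y
  ext a h a' h'
  obtain ⟨n, x1, x2, x3, hx⟩ := TensorProduct.exists_fin_sum_tmul_tmul W.assoc3Inv
  obtain ⟨p, h1, h2, hh⟩ := TensorProduct.exists_fin_sum_tmul (W.comul h)
  have hΔ : ∀ i, ∑ j, W.counit (h2 j) • mulA (act (x1 i) a) (act (x2 i * h1 j) a')
      = mulA (act (x1 i) a) (act (x2 i * h) a') := fun i =>
    W.sum_counit_smul_comul (mulA (act (x1 i) a) ∘ₗ act.flip a' ∘ₗ mulLeft k (x2 i)) hh
  have hΦ : ∑ i, W.counit (x3 i) • mulA (act (x1 i) a) (act (x2 i * h) a') = mulA a (act h a') := by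
    simpa [hact_one] using W.sum_counit_smul_eq_of_counitThird W.counitThird_assoc3Inv
      (mulA.compl₁₂ (act.flip a) (act.flip a' ∘ₗ mulRight k h)) hx
  simp only [TensorProduct.AlgebraTensorModule.curry_apply, TensorProduct.curry_apply,
    LinearMap.restrictScalars_apply, compr₂_apply, hmsm a a' h h' n p x1 x2 x3 h1 h2 hx hh,
    map_sum, QuasiBialgebra.counitRight_tmul, W.counit_mul, compl₂_apply, smashAct_tmul, map_smul]
  rw [← hΦ, Finset.smul_sum]
  refine Finset.sum_congr rfl fun i _ => ?_
  rw [← hΔ i, Finset.smul_sum, Finset.smul_sum]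
  refine Finset.sum_congr rfl fun j _ => ?_
  rw [smul_smul, smul_smul, mul_right_comm, mul_comm (W.counit h')]


theorem lTensor_counitRight_smashMul (hact_one : ∀ a : A, act 1 a = a)
    (hmsm : IsSmashMul W mulA act msm) (X Y : H ⊗[k] (A ⊗[k] H)) :
    lTensor H (W.counitRight A) (TensorProduct.map (mul' k H) (TensorProduct.lift msm)
        (TensorProduct.tensorTensorTensorComm k H (A ⊗[k] H) H (A ⊗[k] H) (X ⊗ₜ[k] Y)))
      = TensorProduct.map (mul' k H) (TensorProduct.lift (smashAct mulA act))
          (TensorProduct.tensorTensorTensorComm k H (A ⊗[k] H) H A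
            (X ⊗ₜ[k] lTensor H (W.counitRight A) Y)) := by
  induction X using TensorProduct.induction_on with
  | zero => simp
  | add X X' hX hX' => simp only [TensorProduct.add_tmul, map_add, hX, hX']
  | tmul g x =>
    induction Y using TensorProduct.induction_on with
    | zero => simp
    | add Y Y' hY hY' => simp only [TensorProduct.tmul_add, map_add, hY, hY']
    | tmul g' y => simp [counitRight_smashMul hact_one hmsm]

theorem lTensor_counitRight_smashCoaction {coact : A →ₗ[k] H ⊗[k] A}
    {lamsm : (A ⊗[k] H) →ₗ[k] H ⊗[k] (A ⊗[k] H)} (hact_one : ∀ a : A, act 1 a = a)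
    (hlamsm : IsSmashCoaction W act coact lamsm) (b : A) (h : H) :
    lTensor H (W.counitRight A) (lamsm (b ⊗ₜ[k] h)) = rTensor A (mulRight k h) (coact b) := by
  obtain ⟨nT, T1, T2, T3, hT⟩ := TensorProduct.exists_fin_sum_tmul_tmul W.assoc3
  obtain ⟨nt, t1, t2, t3, ht⟩ := TensorProduct.exists_fin_sum_tmul_tmul W.assoc3Inv
  obtain ⟨p, h1, h2, hh⟩ := TensorProduct.exists_fin_sum_tmul (W.comul h)
  obtain ⟨K, c1, c0, hc⟩ := TensorProduct.exists_fin_sum_tmul_family fun i => coact (act (t1 i) b)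
  set x := rTensor A (mulRight k h) (coact b)
  have hΔ : ∀ (C : H) (D : A), ∑ j, W.counit (h2 j) • (C * h1 j) ⊗ₜ[k] D = (C * h) ⊗ₜ[k] D :=
    fun C D => W.sum_counit_smul_comul ((TensorProduct.mk k H A).flip D ∘ₗ mulLeft k C) hh
  have hΦinv : ∀ i, ∑ i', W.counit (t3 i') •
      ∑ r, (T1 i * c1 i' r * t2 i' * h) ⊗ₜ[k] act (T2 i) (c0 i' r)
        = TensorProduct.map (mulLeft k (T1 i)) (act (T2 i)) x := by
    intro i
    refine (Finset.sum_congr rfl fun i' _ => ?_).trans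
      ((W.sum_counit_smul_eq_of_counitThird W.counitThird_assoc3Inv
        (((rTensorMulRight k H A).flip ∘ₗ coact ∘ₗ act.flip b).compr₂
          (TensorProduct.map (mulLeft k (T1 i)) (act (T2 i)) ∘ₗ rTensor A (mulRight k h))) ht).trans
        ?_)
    · simp [hc, mul_assoc]
    · simp [x, hact_one]
  have hΦ : ∑ i, W.counit (T3 i) • TensorProduct.map (mulLeft k (T1 i)) (act (T2 i)) x = x := by
    have hact_id : act 1 = LinearMap.id := LinearMap.ext hact_one
    refine (W.sum_counit_smul_eq_of_counitThird W.counitThird_assoc3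
      (((TensorProduct.mapBilinear (RingHom.id k) H A H A).compl₁₂ (LinearMap.mul k H) act).compr₂
        (LinearMap.applyₗ x)) hT).trans ?_
    simp [hact_id, show LinearMap.mul k H 1 = LinearMap.id from LinearMap.ext one_mul]
  rw [hlamsm b h nT nt p K T1 T2 T3 t1 t2 t3 h1 h2 c1 c0 hT ht hh hc]
  simp only [map_sum, lTensor_tmul, QuasiBialgebra.counitRight_tmul, W.counit_mul]
  rw [← hΦ]
  refine Finset.sum_congr rfl fun i _ => ?_
  rw [← hΦinv i, Finset.smul_sum]
  refine Finset.sum_congr rfl fun i' _ => ?_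
  rw [Finset.smul_sum, Finset.smul_sum]
  refine Finset.sum_congr rfl fun r _ => ?_
  rw [← hΔ, Finset.smul_sum, Finset.smul_sum]
  refine Finset.sum_congr rfl fun j _ => ?_
  rw [TensorProduct.tmul_smul, smul_smul, smul_smul, mul_assoc]

theorem coact_one_of_smashCoaction {coact : A →ₗ[k] H ⊗[k] A}
    {lamsm : (A ⊗[k] H) →ₗ[k] H ⊗[k] (A ⊗[k] H)} {oneA : A} (hact_one : ∀ a : A, act 1 a = a)
    (hlamsm : IsSmashCoaction W act coact lamsm)
    (hlam_one : lamsm (oneA ⊗ₜ[k] (1 : H)) = (1 : H) ⊗ₜ[k] (oneA ⊗ₜ[k] (1 : H))) :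
    coact oneA = (1 : H) ⊗ₜ[k] oneA := by
  have := lTensor_counitRight_smashCoaction hact_one hlamsm oneA 1
  rw [hlam_one] at this
  simpa [W.counit_one] using this.symm

theorem sum_rTensor_coact_mul_eq {coact : A →ₗ[k] H ⊗[k] A}
    {lamsm : (A ⊗[k] H) →ₗ[k] H ⊗[k] (A ⊗[k] H)} (hact_one : ∀ a : A, act 1 a = a)
    (hmsm : IsSmashMul W mulA act msm) (hlamsm : IsSmashCoaction W act coact lamsm)
    (hlam_alg : ∀ x y : A ⊗[k] H,
      lamsm (msm x y)
        = (TensorProduct.map (LinearMap.mul' k H) (TensorProduct.lift msm))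
            ((TensorProduct.tensorTensorTensorComm k H (A ⊗[k] H) H (A ⊗[k] H))
              (lamsm x ⊗ₜ[k] lamsm y)))
    (a a' : A) {nX nx K L : ℕ} {X1 X2 X3 : Fin nX → H} {x1 x2 x3 : Fin nx → H}
    {c1 : Fin nx → Fin K → H} {c0 : Fin nx → Fin K → A} {d1 : Fin L → H} {d0 : Fin L → A}
    (hX : W.assoc3 = ∑ i, (X1 i ⊗ₜ[k] X2 i) ⊗ₜ[k] X3 i)
    (hx : W.assoc3Inv = ∑ j, (x1 j ⊗ₜ[k] x2 j) ⊗ₜ[k] x3 j)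
    (hc : ∀ j, coact (act (x1 j) a) = ∑ r, c1 j r ⊗ₜ[k] c0 j r)
    (hd : coact a' = ∑ s, d1 s ⊗ₜ[k] d0 s) :
    ∑ j, rTensor A (mulRight k (x3 j)) (coact (mulA (act (x1 j) a) (act (x2 j) a')))
      = ∑ i, ∑ j, ∑ r, ∑ s, (X1 i * c1 j r * x2 j * d1 s) ⊗ₜ[k]
          mulA (act (X2 i) (c0 j r)) (act (X3 i * x3 j) (d0 s)) := by
  have hcomul_one : W.comul 1 = ∑ _i : Fin 1, (1 : H) ⊗ₜ[k] (1 : H) := by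
    simp [W.comul_one, Algebra.TensorProduct.one_def]
  calc _ = lTensor H (W.counitRight A) (lamsm (msm (a ⊗ₜ[k] 1) (a' ⊗ₜ[k] 1))) := by
        rw [hmsm a a' 1 1 nx 1 x1 x2 x3 _ _ hx hcomul_one]
        simp [lTensor_counitRight_smashCoaction hact_one hlamsm]
    _ = _ := by
        rw [hlam_alg, lTensor_counitRight_smashMul hact_one hmsm,
          lTensor_counitRight_smashCoaction hact_one hlamsm,
          hlamsm a 1 nX nx 1 K X1 X2 X3 x1 x2 x3 _ _ c1 c0 hX hx hcomul_one hc]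
        simp only [TensorProduct.sum_tmul, map_sum]
        simp [hd, TensorProduct.tmul_sum]

end SmashProduct

theorem quasiBialgebra_smash_coaction_algebra_map_implies_YD_algebra_general
    {k H : Type*} [CommRing k] [Ring H] [Algebra k H]
    (W : QuasiBialgebra k H) {A : Type*} [AddCommGroup A] [Module k A]
    (mulA : A →ₗ[k] A →ₗ[k] A) (oneA : A)
    (act : H →ₗ[k] A →ₗ[k] A) (coact : A →ₗ[k] H ⊗[k] A)
    -- `A` is a left `H`-module:
    (hact_mul : ∀ (h h' : H) (a : A), act (h * h') a = act h (act h' a))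
    (hact_one : ∀ a : A, act 1 a = a)
    -- the smash product multiplication `(a # h)(a' # h') = (x¹·a)(x²h₁·a') # x³h₂h'`:
    (msm : (A ⊗[k] H) →ₗ[k] (A ⊗[k] H) →ₗ[k] (A ⊗[k] H))
    (hmsm : ∀ (a a' : A) (h h' : H) (n p : ℕ) (x1 x2 x3 : Fin n → H) (h1 h2 : Fin p → H),
      W.assoc3Inv = ∑ i, (x1 i ⊗ₜ[k] x2 i) ⊗ₜ[k] x3 i →
      W.comul h = ∑ j, h1 j ⊗ₜ[k] h2 j →
      msm (a ⊗ₜ[k] h) (a' ⊗ₜ[k] h')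
        = ∑ i, ∑ j, mulA (act (x1 i) a) (act (x2 i * h1 j) a')
            ⊗ₜ[k] (x3 i * h2 j * h'))
    -- the map `λ(a # h) = T¹(t¹·a)⁽⁻¹⁾t²h₁ ⊗ (T²·(t¹·a)⁽⁰⁾ # T³t³h₂)`:
    (lamsm : (A ⊗[k] H) →ₗ[k] H ⊗[k] (A ⊗[k] H))
    (hlamsm : ∀ (a : A) (h : H) (nT nt p K : ℕ)
        (T1 T2 T3 : Fin nT → H) (t1 t2 t3 : Fin nt → H) (h1 h2 : Fin p → H)
        (c1 : Fin nt → Fin K → H) (c0 : Fin nt → Fin K → A),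
      W.assoc3 = ∑ i, (T1 i ⊗ₜ[k] T2 i) ⊗ₜ[k] T3 i →
      W.assoc3Inv = ∑ i, (t1 i ⊗ₜ[k] t2 i) ⊗ₜ[k] t3 i →
      W.comul h = ∑ j, h1 j ⊗ₜ[k] h2 j →
      (∀ i, coact (act (t1 i) a) = ∑ r, c1 i r ⊗ₜ[k] c0 i r) →
      lamsm (a ⊗ₜ[k] h)
        = ∑ i, ∑ i', ∑ r, ∑ j, (T1 i * c1 i' r * t2 i' * h1 j) ⊗ₜ[k]
            (act (T2 i) (c0 i' r) ⊗ₜ[k] (T3 i * t3 i' * h2 j)))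
    -- ... which is assumed to be an algebra map:
    (hlam_alg : ∀ x y : A ⊗[k] H,
      lamsm (msm x y)
        = (TensorProduct.map (LinearMap.mul' k H) (TensorProduct.lift msm))
            ((TensorProduct.tensorTensorTensorComm k H (A ⊗[k] H) H (A ⊗[k] H))
              (lamsm x ⊗ₜ[k] lamsm y)))
    (hlam_one : lamsm (oneA ⊗ₜ[k] (1 : H)) = (1 : H) ⊗ₜ[k] (oneA ⊗ₜ[k] (1 : H))) :
    -- conclusion: `A` is an algebra in the category of Yetter–Drinfeld modules:
    coact oneA = (1 : H) ⊗ₜ[k] oneA ∧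
    (∀ (a a' : A) (nX nx nY K L : ℕ)
        (X1 X2 X3 : Fin nX → H) (x1 x2 x3 : Fin nx → H) (Y1 Y2 Y3 : Fin nY → H)
        (c1 : Fin nx → Fin nY → Fin K → H) (c0 : Fin nx → Fin nY → Fin K → A)
        (d1 : Fin nY → Fin L → H) (d0 : Fin nY → Fin L → A),
      W.assoc3 = ∑ i, (X1 i ⊗ₜ[k] X2 i) ⊗ₜ[k] X3 i →
      W.assoc3Inv = ∑ j, (x1 j ⊗ₜ[k] x2 j) ⊗ₜ[k] x3 j →
      W.assoc3 = ∑ l, (Y1 l ⊗ₜ[k] Y2 l) ⊗ₜ[k] Y3 l →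
      (∀ j l, coact (act (x1 j * Y1 l) a) = ∑ r, c1 j l r ⊗ₜ[k] c0 j l r) →
      (∀ l, coact (act (Y2 l) a') = ∑ s, d1 l s ⊗ₜ[k] d0 l s) →
      coact (mulA a a')
        = ∑ i, ∑ j, ∑ l, ∑ r, ∑ s,
            (X1 i * c1 j l r * x2 j * d1 l s * Y3 l) ⊗ₜ[k]
              mulA (act (X2 i) (c0 j l r)) (act (X3 i * x3 j) (d0 l s))) := by
  refine ⟨coact_one_of_smashCoaction hact_one hlamsm hlam_one, ?_⟩
  intro a a' nX nx nY K L X1 X2 X3 x1 x2 x3 Y1 Y2 Y3 c1 c0 d1 d0 hX hx hY hc hd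
  have hΦinvΦ := W.sum_apply_assoc3Inv_mul_assoc3 (TensorProduct.lift
    ((rTensorMulRight k H A).flip ∘ₗ coact ∘ₗ
      TensorProduct.lift (mulA.compl₁₂ (act.flip a) (act.flip a')))) hx hY
  simp only [Algebra.TensorProduct.one_def, TensorProduct.lift.tmul, comp_apply, flip_apply,
    compl₁₂_apply, hact_one, rTensorMulRight_apply, mulRight_one, rTensor_id, id_coe, id_eq]
    at hΦinvΦ
  have htwisted := fun l => sum_rTensor_coact_mul_eq hact_one hmsm hlamsm hlam_alg
    (act (Y1 l) a) (act (Y2 l) a') hX hx (fun j => by rw [← hact_mul]; exact hc j l) (hd l)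
  rw [← hΦinvΦ, Finset.sum_comm]
  calc _ = ∑ l, rTensor A (mulRight k (Y3 l)) (∑ j, rTensor A (mulRight k (x3 j))
        (coact (mulA (act (x1 j) (act (Y1 l) a)) (act (x2 j) (act (Y2 l) a'))))) := by
        simp only [map_sum, hact_mul, mulRight_mul, rTensor_comp, comp_apply]
    _ = _ := by
        simp only [htwisted, map_sum, rTensor_tmul, mulRight_apply]
        rw [Finset.sum_comm]
        exact Finset.sum_congr rfl fun i _ => Finset.sum_comm

/-- Let `H` be a quasi-bialgebra and `A` a left-left Yetter–Drinfeld module over `H` which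
is also a left `H`-module algebra.  If the map
`λ(a # h) = T¹(t¹·a)⁽⁻¹⁾t²h₁ ⊗ (T²·(t¹·a)⁽⁰⁾ # T³t³h₂)` on the smash product `A # H` is an
algebra map, then `A` is an algebra in the category of Yetter–Drinfeld modules; in particular
`λ_A(aa') = X¹(x¹Y¹·a)⁽⁻¹⁾x²(Y²·a')⁽⁻¹⁾Y³ ⊗ [X²·(x¹Y¹·a)⁽⁰⁾][X³x³·(Y²·a')⁽⁰⁾]`.
All Sweedler sums are expressed through arbitrary finite representations of the tensors
involved. -/
theorem quasiBialgebra_smash_coaction_algebra_map_implies_YD_algebra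
    {k H : Type*} [CommRing k] [Ring H] [Algebra k H]
    (W : QuasiBialgebra k H) {A : Type*} [AddCommGroup A] [Module k A]
    (mulA : A →ₗ[k] A →ₗ[k] A) (oneA : A)
    (act : H →ₗ[k] A →ₗ[k] A) (coact : A →ₗ[k] H ⊗[k] A)
    -- `A` is a left `H`-module:
    (hact_mul : ∀ (h h' : H) (a : A), act (h * h') a = act h (act h' a))
    (hact_one : ∀ a : A, act 1 a = a)
    -- `A` is a left `H`-module algebra (quasi-associative multiplication):
    (hma_assoc : ∀ (a a' a'' : A) (n : ℕ) (X1 X2 X3 : Fin n → H),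
      W.assoc3 = ∑ i, (X1 i ⊗ₜ[k] X2 i) ⊗ₜ[k] X3 i →
      mulA (mulA a a') a''
        = ∑ i, mulA (act (X1 i) a) (mulA (act (X2 i) a') (act (X3 i) a'')))
    (hma_mul : ∀ (h : H) (a a' : A) (n : ℕ) (h1 h2 : Fin n → H),
      W.comul h = ∑ i, h1 i ⊗ₜ[k] h2 i →
      act h (mulA a a') = ∑ i, mulA (act (h1 i) a) (act (h2 i) a'))
    (hma_one : ∀ h : H, act h oneA = W.counit h • oneA)
    (hA_one_mul : ∀ a : A, mulA oneA a = a)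
    (hA_mul_one : ∀ a : A, mulA a oneA = a)
    -- `A` is a left-left Yetter–Drinfeld module over `H`:
    (hyd_counit : ∀ (a : A) (N : ℕ) (a1 : Fin N → H) (a0 : Fin N → A),
      coact a = ∑ i, a1 i ⊗ₜ[k] a0 i → ∑ i, W.counit (a1 i) • a0 i = a)
    (hyd3 : ∀ (h : H) (a : A) (n N K : ℕ) (h1 h2 : Fin n → H)
        (p1 : Fin n → Fin K → H) (p0 : Fin n → Fin K → A)
        (a1 : Fin N → H) (a0 : Fin N → A),
      W.comul h = ∑ i, h1 i ⊗ₜ[k] h2 i →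
      (∀ i, coact (act (h1 i) a) = ∑ r, p1 i r ⊗ₜ[k] p0 i r) →
      coact a = ∑ j, a1 j ⊗ₜ[k] a0 j →
      ∑ i, ∑ r, (p1 i r * h2 i) ⊗ₜ[k] p0 i r
        = ∑ i, ∑ j, (h1 i * a1 j) ⊗ₜ[k] act (h2 i) (a0 j))
    (hyd1 : ∀ (a : A) (nX nY N K L : ℕ)
        (X1 X2 X3 : Fin nX → H) (Y1 Y2 Y3 : Fin nY → H)
        (a1 : Fin N → H) (a0 : Fin N → A)
        (c1 : Fin nX → Fin N → Fin K → H) (c0 : Fin nX → Fin N → Fin K → A)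
        (d1 : Fin nY → Fin K → H) (d0 : Fin nY → Fin K → A)
        (g1 g2 : Fin nY → Fin K → Fin L → H),
      W.assoc3 = ∑ i, (X1 i ⊗ₜ[k] X2 i) ⊗ₜ[k] X3 i →
      W.assoc3 = ∑ l, (Y1 l ⊗ₜ[k] Y2 l) ⊗ₜ[k] Y3 l →
      coact a = ∑ j, a1 j ⊗ₜ[k] a0 j →
      (∀ i j, coact (act (X2 i) (a0 j)) = ∑ r, c1 i j r ⊗ₜ[k] c0 i j r) →
      (∀ l, coact (act (Y1 l) a) = ∑ s, d1 l s ⊗ₜ[k] d0 l s) →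
      (∀ l s, W.comul (d1 l s) = ∑ t, g1 l s t ⊗ₜ[k] g2 l s t) →
      ∑ i, ∑ j, ∑ r, ((X1 i * a1 j) ⊗ₜ[k] (c1 i j r * X3 i)) ⊗ₜ[k] c0 i j r
        = ∑ l, ∑ s, ∑ t, ∑ i,
            ((X1 i * g1 l s t * Y2 l) ⊗ₜ[k] (X2 i * g2 l s t * Y3 l)) ⊗ₜ[k]
              act (X3 i) (d0 l s))
    -- the smash product multiplication `(a # h)(a' # h') = (x¹·a)(x²h₁·a') # x³h₂h'`:
    (msm : (A ⊗[k] H) →ₗ[k] (A ⊗[k] H) →ₗ[k] (A ⊗[k] H))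
    (hmsm : ∀ (a a' : A) (h h' : H) (n p : ℕ) (x1 x2 x3 : Fin n → H) (h1 h2 : Fin p → H),
      W.assoc3Inv = ∑ i, (x1 i ⊗ₜ[k] x2 i) ⊗ₜ[k] x3 i →
      W.comul h = ∑ j, h1 j ⊗ₜ[k] h2 j →
      msm (a ⊗ₜ[k] h) (a' ⊗ₜ[k] h')
        = ∑ i, ∑ j, mulA (act (x1 i) a) (act (x2 i * h1 j) a')
            ⊗ₜ[k] (x3 i * h2 j * h'))
    -- the map `λ(a # h) = T¹(t¹·a)⁽⁻¹⁾t²h₁ ⊗ (T²·(t¹·a)⁽⁰⁾ # T³t³h₂)`: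
    (lamsm : (A ⊗[k] H) →ₗ[k] H ⊗[k] (A ⊗[k] H))
    (hlamsm : ∀ (a : A) (h : H) (nT nt p K : ℕ)
        (T1 T2 T3 : Fin nT → H) (t1 t2 t3 : Fin nt → H) (h1 h2 : Fin p → H)
        (c1 : Fin nt → Fin K → H) (c0 : Fin nt → Fin K → A),
      W.assoc3 = ∑ i, (T1 i ⊗ₜ[k] T2 i) ⊗ₜ[k] T3 i →
      W.assoc3Inv = ∑ i, (t1 i ⊗ₜ[k] t2 i) ⊗ₜ[k] t3 i →
      W.comul h = ∑ j, h1 j ⊗ₜ[k] h2 j →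
      (∀ i, coact (act (t1 i) a) = ∑ r, c1 i r ⊗ₜ[k] c0 i r) →
      lamsm (a ⊗ₜ[k] h)
        = ∑ i, ∑ i', ∑ r, ∑ j, (T1 i * c1 i' r * t2 i' * h1 j) ⊗ₜ[k]
            (act (T2 i) (c0 i' r) ⊗ₜ[k] (T3 i * t3 i' * h2 j)))
    -- ... which is assumed to be an algebra map:
    (hlam_alg : ∀ x y : A ⊗[k] H,
      lamsm (msm x y)
        = (TensorProduct.map (LinearMap.mul' k H) (TensorProduct.lift msm))
            ((TensorProduct.tensorTensorTensorComm k H (A ⊗[k] H) H (A ⊗[k] H))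
              (lamsm x ⊗ₜ[k] lamsm y)))
    (hlam_one : lamsm (oneA ⊗ₜ[k] (1 : H)) = (1 : H) ⊗ₜ[k] (oneA ⊗ₜ[k] (1 : H))) :
    -- conclusion: `A` is an algebra in the category of Yetter–Drinfeld modules:
    coact oneA = (1 : H) ⊗ₜ[k] oneA ∧
    (∀ (a a' : A) (nX nx nY K L : ℕ)
        (X1 X2 X3 : Fin nX → H) (x1 x2 x3 : Fin nx → H) (Y1 Y2 Y3 : Fin nY → H)
        (c1 : Fin nx → Fin nY → Fin K → H) (c0 : Fin nx → Fin nY → Fin K → A)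
        (d1 : Fin nY → Fin L → H) (d0 : Fin nY → Fin L → A),
      W.assoc3 = ∑ i, (X1 i ⊗ₜ[k] X2 i) ⊗ₜ[k] X3 i →
      W.assoc3Inv = ∑ j, (x1 j ⊗ₜ[k] x2 j) ⊗ₜ[k] x3 j →
      W.assoc3 = ∑ l, (Y1 l ⊗ₜ[k] Y2 l) ⊗ₜ[k] Y3 l →
      (∀ j l, coact (act (x1 j * Y1 l) a) = ∑ r, c1 j l r ⊗ₜ[k] c0 j l r) →
      (∀ l, coact (act (Y2 l) a') = ∑ s, d1 l s ⊗ₜ[k] d0 l s) →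
      coact (mulA a a')
        = ∑ i, ∑ j, ∑ l, ∑ r, ∑ s,
            (X1 i * c1 j l r * x2 j * d1 l s * Y3 l) ⊗ₜ[k]
              mulA (act (X2 i) (c0 j l r)) (act (X3 i * x3 j) (d0 l s))) :=
  quasiBialgebra_smash_coaction_algebra_map_implies_YD_algebra_general W mulA oneA act coact
    hact_mul hact_one msm hmsm lamsm hlamsm hlam_alg hlam_one
end
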